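/- Let N ≥ 2 be an integer and c a real number with P_{N−1}(c) ≠ 0. Suppose z_0, z_1, …, z_{N−1} are real numbers satisfying z_a = c·(z_{a−1} + z_{a+1}) for every a with 1 ≤ a ≤ N−2, and z_{N−1} = c·z_{N−2}. Then z_a = z_0 · c^a · P_{N−1−a}(c) / P_{N−1}(c) for every 0 ≤ a ≤ N−1. -/

import Mathlib

open Real

/-- `Pf m t = ∏_{k=1}^m (1 - 2 t cos(kπ/(m+1)))`, with `Pf 0 t = 1`. -/
noncomputable def Pf (m : ℕ) (t : ℝ) : ℝ :=
  ∏ k ∈ Finset.Icc 1 m, (1 - 2 * t * Real.cos (k * π / (m + 1)))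

open Finset Polynomial

lemma prod_pow_root (M : ℕ) (hM : 0 < M) (ζ w : ℂ) (hζ : IsPrimitiveRoot ζ M) :
    ∏ j ∈ range M, (w - ζ ^ j) = w ^ M - 1 := by
  have h := Polynomial.X_pow_sub_one_eq_prod hM hζ
  have he := congrArg (Polynomial.eval w) h
  simp only [eval_sub, eval_pow, eval_X, eval_one, eval_prod, eval_sub, eval_C] at he
  have hinj : ∀ a ∈ range M, ∀ b ∈ range M, ζ ^ a = ζ ^ b → a = b := by
    intro a ha b hb hab
    exact hζ.injOn_pow (by simpa using ha) (by simpa using hb) hab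
  have himg : Polynomial.nthRootsFinset M (1:ℂ) = (range M).image (fun j : ℕ => ζ ^ j) := by
    ext x
    simp only [Finset.mem_image, Finset.mem_range, Polynomial.mem_nthRootsFinset hM (1:ℂ)]
    constructor
    · intro hx
      have : NeZero M := ⟨hM.ne'⟩
      obtain ⟨i, hi, rfl⟩ := hζ.eq_pow_of_pow_eq_one hx
      exact ⟨i, hi, rfl⟩
    · rintro ⟨j, hj, rfl⟩; rw [← pow_mul, mul_comm, pow_mul, hζ.pow_eq_one, one_pow]
  rw [he, himg, Finset.prod_image hinj]

lemma keyC (m : ℕ) (w : ℂ) :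
    (∏ k ∈ Icc 1 m, (1 + w^2 - 2*w*Complex.cos ((k:ℂ)*(π:ℝ)/((m:ℂ)+1)))) * (w^2-1)
      = w^(2*m+2) - 1 := by
  have hn0 : ((m:ℂ)+1) ≠ 0 := by
    have := Nat.cast_add_one_ne_zero (R := ℂ) m
    exact_mod_cast this
  set ζ : ℂ := Complex.exp (↑π * Complex.I / ((m:ℂ)+1)) with hζdef
  have hprim : IsPrimitiveRoot ζ (2*(m+1)) := by
    have := Complex.isPrimitiveRoot_exp (2*(m+1)) (by omega)
    convert this using 2
    push_cast
    field_simp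
  have hpow : ∀ k : ℕ, ζ ^ k = Complex.exp ((k:ℂ) * ↑π / ((m:ℂ)+1) * Complex.I) := by
    intro k
    rw [hζdef, ← Complex.exp_nat_mul]
    congr 1
    ring
  have hzn : ζ ^ (m+1) = -1 := by
    rw [hpow, show ((m+1:ℕ):ℂ) * ↑π / ((m:ℂ)+1) * Complex.I = ↑π * Complex.I by
      push_cast; field_simp]
    exact Complex.exp_pi_mul_I
  have hfac : ∀ k ∈ Icc 1 m, 1 + w^2 - 2*w*Complex.cos ((k:ℂ)*(π:ℝ)/((m:ℂ)+1))
      = (w - ζ^k) * (w - ζ^(2*(m+1) - k)) := by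
    intro k hk
    simp only [mem_Icc] at hk
    set θ : ℂ := (k:ℂ) * ↑π / ((m:ℂ)+1) with hθ
    have hE : ζ^k = Complex.exp (θ * Complex.I) := hpow k
    have hF : ζ^(2*(m+1) - k) = Complex.exp (-(θ * Complex.I)) := by
      rw [hpow, show ((2*(m+1) - k : ℕ):ℂ) * ↑π / ((m:ℂ)+1) * Complex.I
          = 2*↑π*Complex.I + -(θ * Complex.I) by
        rw [Nat.cast_sub (by omega)]; push_cast; rw [hθ]; field_simp; ring]
      rw [Complex.exp_add, Complex.exp_two_pi_mul_I, one_mul]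
    have h1 : Complex.exp (θ * Complex.I) * Complex.exp (-(θ * Complex.I)) = 1 := by
      rw [← Complex.exp_add]; simp
    have h2 := Complex.two_cos θ
    rw [hE, hF, neg_mul] at *
    linear_combination (-1) * h1 - w * h2
  have hsplit : ∏ k ∈ Icc 1 m, ((w - ζ^k)*(w - ζ^(2*(m+1)-k)))
      = (∏ k ∈ Icc 1 m, (w - ζ^k)) * ∏ j ∈ Icc (m+2) (2*m+1), (w - ζ^j) := by
    rw [Finset.prod_mul_distrib]
    congr 1
    refine Finset.prod_nbij' (fun k => 2*(m+1) - k) (fun j => 2*(m+1) - j) ?_ ?_ ?_ ?_ ?_ <;>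
      intro a ha <;> simp only [mem_Icc] at * <;> first | omega | (congr 1; omega)
  have hunion : range (2*(m+1)) = insert 0 (insert (m+1) ((Icc 1 m) ∪ Icc (m+2) (2*m+1))) := by
    ext x
    simp only [mem_range, mem_insert, mem_union, mem_Icc]
    omega
  have hall : ∏ j ∈ range (2*(m+1)), (w - ζ^j) = w^(2*(m+1)) - 1 :=
    prod_pow_root (2*(m+1)) (by omega) ζ w hprim
  rw [hunion, Finset.prod_insert (by simp only [mem_insert, mem_union, mem_Icc]; omega),
    Finset.prod_insert (by simp only [mem_union, mem_Icc]; omega),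
    Finset.prod_union (by rw [Finset.disjoint_left]; intro x hx hx'; simp only [mem_Icc] at *; omega),
    pow_zero, hzn, show 2*(m+1) = 2*m+2 from by ring] at hall
  rw [Finset.prod_congr rfl hfac, hsplit]
  linear_combination hall

lemma keyR (m : ℕ) (w : ℝ) :
    (∏ k ∈ Icc 1 m, (1 + w^2 - 2*w*Real.cos (k*π/(m+1)))) * (w^2-1)
      = w^(2*m+2) - 1 := by
  have h := keyC m (w:ℂ)
  exact_mod_cast h

lemma Pf_closed (m : ℕ) (w : ℝ) (h1 : w^2 - 1 ≠ 0) :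
    Pf m (w/(1+w^2)) = (w^(2*m+2) - 1)/((w^2-1) * (1+w^2)^m) := by
  have hB : (1+w^2) ≠ 0 := by positivity
  have hprod : Pf m (w/(1+w^2)) * (1+w^2)^m
      = ∏ k ∈ Icc 1 m, (1 + w^2 - 2*w*Real.cos (k*π/(m+1))) := by
    have hcard : (Icc 1 m).card = m := by simp
    rw [Pf, show ((1:ℝ)+w^2)^m = ∏ _k ∈ Icc 1 m, (1+w^2) from by
      rw [Finset.prod_const, hcard], ← Finset.prod_mul_distrib]
    apply Finset.prod_congr rfl
    intro k hk
    field_simp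
  have hk := keyR m w
  rw [eq_div_iff (by exact mul_ne_zero h1 (pow_ne_zero _ hB)), ← hk, ← hprod]
  ring

open Polynomial in
noncomputable def Pp (m : ℕ) : Polynomial ℝ :=
  ∏ k ∈ Finset.Icc 1 m, (C 1 - C (2 * Real.cos (k * π / (m + 1))) * X)

lemma Pf_eval (m : ℕ) (t : ℝ) : (Pp m).eval t = Pf m t := by
  rw [Pp, Pf, Polynomial.eval_prod]
  refine Finset.prod_congr rfl fun k _ => ?_
  simp only [Polynomial.eval_sub, Polynomial.eval_mul, Polynomial.eval_C,
    Polynomial.eval_X, Polynomial.eval_one]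
  ring

lemma Pf_rec (m : ℕ) (t : ℝ) : Pf (m+2) t = Pf (m+1) t - t^2 * Pf m t := by
  have hroot : ∀ s ∈ Set.Ioo (0:ℝ) (1/2),
      Pf (m+2) s = Pf (m+1) s - s^2 * Pf m s := by
    rintro s ⟨hs0, hs1⟩
    have h4 : 0 < 1 - 4*s^2 := by nlinarith
    set r : ℝ := Real.sqrt (1 - 4*s^2) with hrdef
    have hr2 : r^2 = 1 - 4*s^2 := Real.sq_sqrt h4.le
    have hr0 : 0 < r := Real.sqrt_pos.mpr h4
    have hr1 : r < 1 := by nlinarith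
    set w : ℝ := (1 - r)/(2*s) with hwdef
    have hw0 : 0 < w := div_pos (by linarith) (by linarith)
    have hw1 : w < 1 := by
      rw [hwdef, div_lt_one (by linarith)]
      nlinarith
    have hwsq : w^2 - 1 ≠ 0 := by nlinarith
    have hB : (1:ℝ) + w^2 ≠ 0 := by positivity
    have hw : s * w^2 - w + s = 0 := by
      rw [hwdef]
      field_simp
      nlinarith [hr2]
    have hts : w/(1+w^2) = s := by
      rw [div_eq_iff hB]
      linarith [hw]
    have e0 := Pf_closed m w hwsq
    have e1 := Pf_closed (m+1) w hwsq
    have e2 := Pf_closed (m+2) w hwsq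
    rw [hts] at e0 e1 e2
    rw [e0, e1, e2]
    rw [← hts]
    field_simp
    ring
  have hpoly : Pp (m+2) - (Pp (m+1) - Polynomial.X^2 * Pp m) = 0 := by
    apply Polynomial.eq_zero_of_infinite_isRoot
    apply Set.Infinite.mono ?_ (Set.Ioo_infinite (by norm_num : (0:ℝ) < 1/2))
    intro s hs
    simp only [Set.mem_setOf_eq, Polynomial.IsRoot, Polynomial.eval_sub,
      Polynomial.eval_mul, Polynomial.eval_pow, Polynomial.eval_X, Pf_eval]
    have := hroot s hs
    linarith [hroot s hs]
  have := congrArg (Polynomial.eval t) hpoly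
  simp only [Polynomial.eval_sub, Polynomial.eval_mul, Polynomial.eval_pow,
    Polynomial.eval_X, Polynomial.eval_zero, Pf_eval] at this
  linarith

lemma Pf_zero (t : ℝ) : Pf 0 t = 1 := by simp [Pf]

lemma Pf_one (t : ℝ) : Pf 1 t = 1 := by
  simp [Pf, Finset.Icc_self]
  norm_num

/-- Solution of the linear recurrence `z_a = c (z_{a-1} + z_{a+1})`
(`1 ≤ a ≤ N-2`) with boundary condition `z_{N-1} = c z_{N-2}`:
`z_a = z_0 c^a P_{N-1-a}(c) / P_{N-1}(c)` for `0 ≤ a ≤ N-1`. -/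
theorem recurrence_solution (N : ℕ) (hN : 2 ≤ N) (c : ℝ) (hc : Pf (N - 1) c ≠ 0)
    (z : ℕ → ℝ)
    (hrec : ∀ a : ℕ, 1 ≤ a → a ≤ N - 2 → z a = c * (z (a - 1) + z (a + 1)))
    (hbd : z (N - 1) = c * z (N - 2)) :
    ∀ a : ℕ, a ≤ N - 1 → z a = z 0 * c ^ a * Pf (N - 1 - a) c / Pf (N - 1) c := by
  set n : ℕ := N - 1 with hn
  have hn1 : 1 ≤ n := by omega
  have hN2 : N - 2 = n - 1 := by omega
  -- chain relation
  have R : ∀ j : ℕ, j ≤ n - 1 → Pf (j+1) c * z (n - j) = c * Pf j c * z (n - j - 1) := by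
    intro j
    induction j with
    | zero =>
      intro _
      rw [Pf_one, Pf_zero, Nat.sub_zero, one_mul, mul_one]
      rw [hn, hbd, hN2]
    | succ j IH =>
      intro hj
      have IH' := IH (by omega)
      have ha : 1 ≤ n - j - 1 := by omega
      have ha2 : n - j - 1 ≤ N - 2 := by omega
      have hr := hrec (n - j - 1) ha (by omega)
      have e2 : n - j - 1 + 1 = n - j := by omega
      rw [e2] at hr
      have hp := Pf_rec j c
      have goal1 : n - (j+1) = n - j - 1 := by omega
      rw [goal1, hp]
      linear_combination Pf (j+1) c * hr + c * IH'
  -- main formula times Pf n c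
  have G : ∀ a : ℕ, a ≤ n → Pf n c * z a = z 0 * c ^ a * Pf (n - a) c := by
    intro a
    induction a using Nat.strong_induction_on with
    | _ a IH =>
      intro ha
      match a with
      | 0 => simp only [pow_zero, Nat.sub_zero]; ring
      | (a+1) =>
        have IH1 := IH a (by omega) (by omega)
        by_cases h0 : Pf (n - a) c = 0
        · -- degenerate case: Pf (n - a) c = 0
          match a, IH1, h0 with
          | 0, IH1, h0 => exact absurd h0 (by simpa using hc)
          | (b+1), IH1, h0 =>
            have hz : z (b+1) = 0 := by
              have h' : Pf n c * z (b+1) = 0 := by rw [IH1, h0]; ring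
              rcases mul_eq_zero.mp h' with h | h
              · exact absurd h hc
              · exact h
            have hc0 : c ≠ 0 := by
              intro hcc
              rw [hcc] at h0
              have h1' : Pf (n - (b+1)) (0:ℝ) = 1 := by simp [Pf]
              rw [h1'] at h0
              exact one_ne_zero h0
            have hr := hrec (b+1) (by omega) (by omega)
            have hz2 : z (b+2) = - z b := by
              rw [hz] at hr
              have : z b + z (b+1+1) = 0 := by
                rcases mul_eq_zero.mp hr.symm with h | h
                · exact absurd h hc0
                · exact h
              have hbb : b + 1 + 1 = b + 2 := by omega
              rw [hbb] at this
              linarith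
            have IH2 := IH b (by omega) (by omega)
            have hp := Pf_rec (n - (b+2)) c
            have e1 : n - (b+2) + 2 = n - b := by omega
            have e2 : n - (b+2) + 1 = n - (b+1) := by omega
            rw [e1, e2] at hp
            have e3 : b + 1 + 1 = b + 2 := by omega
            rw [e3, hz2]
            linear_combination (-1) * IH2 - z 0 * c^b * hp - z 0 * c^b * h0
        · -- generic case
          have hR := R (n - (a+1)) (by omega)
          have f1 : n - (a+1) + 1 = n - a := by omega
          have f2 : n - (n - (a+1)) = a + 1 := by omega
          rw [f1, f2, show a + 1 - 1 = a from rfl] at hR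
          apply mul_left_cancel₀ h0
          linear_combination (Pf n c) * hR + (c * Pf (n - (a+1)) c) * IH1
  intro a ha
  have hG := G a ha
  rw [eq_div_iff hc]
  linear_combination hG
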